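/- arXiv:2502.09551 — 3 statements merged into one kernel-verified Lean document; each statement's English description precedes it below -/
import Mathlib

section
/- Let α ∈ [0,2], r : ℝ → ℝ measurable with r = 0 on [−ε,ε] and x·r(x) > 0 a.e. off [−ε,ε] for some ε > 0, η_α(x) := (√(|x|^α+1) − √(|x|^α))|r(x)|, ω_α(x) := √(|x|^α)|r(x)|. Then for every f in L²(ω_α), writing f_o(x) = ½(f(x) − f(−x)), one has ∫ (√(|x|^α+1) f(x) − √(|x|^α) f(−x))·conj(f(x))·|r(x)| dx = 2∫|f_o|² ω_α dx + ∫|f|² η_α dx, and in particular the left-hand side is nonnegative and finite. -/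
open MeasureTheory Filter

/-- `η_α(x) := (√(|x|^α+1) − √(|x|^α))·|r(x)|`. -/
noncomputable def eta (α : ℝ) (r : ℝ → ℝ) (x : ℝ) : ℝ :=
  (Real.sqrt (|x| ^ α + 1) - Real.sqrt (|x| ^ α)) * |r x|

/-- `ω_α(x) := √(|x|^α)·|r(x)|`. -/
noncomputable def omegaW (α : ℝ) (r : ℝ → ℝ) (x : ℝ) : ℝ :=
  Real.sqrt (|x| ^ α) * |r x|

/-- `r₊(x) := x·r(x)`. -/
def rplus (r : ℝ → ℝ) (x : ℝ) : ℝ := x * r x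

/-- `r₋(x) := r(x)/x` (with junk value `0` at `x = 0`, where `r` vanishes anyway). -/
noncomputable def rminus (r : ℝ → ℝ) (x : ℝ) : ℝ := r x / x

/-- Membership in the weighted space `L²(w)`. -/
def MemL2W (w : ℝ → ℝ) (f : ℝ → ℂ) : Prop :=
  Integrable (fun x => ‖f x‖ ^ 2 * w x)

/-- Even part of a function. -/
noncomputable def evenPart (f : ℝ → ℂ) (x : ℝ) : ℂ := (f x + f (-x)) / 2

/-- Odd part of a function. -/
noncomputable def oddPart (f : ℝ → ℂ) (x : ℝ) : ℂ := (f x - f (-x)) / 2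

/-- `dom t_α = {f ∈ L²(r₋) : f_e ∈ L²(η_α), f_o ∈ L²(ω_α)}`. -/
noncomputable def DomT (α : ℝ) (r : ℝ → ℝ) (f : ℝ → ℂ) : Prop :=
  MemL2W (rminus r) f ∧ MemL2W (eta α r) (evenPart f) ∧ MemL2W (omegaW α r) (oddPart f)

/-- The squared norm `t_α(f,f) = 2‖f_o‖²_{ω_α} + ‖f‖²_{η_α}`. -/
noncomputable def Qform (α : ℝ) (r : ℝ → ℝ) (f : ℝ → ℂ) : ℝ :=
  2 * (∫ x, ‖oddPart f x‖ ^ 2 * omegaW α r x) + ∫ x, ‖f x‖ ^ 2 * eta α r x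


/-! Off `[-ε, ε]` one has `|x|^α ≥ ε^α`, and `√(t+1) - √t ≤ 1 / (2√t)`, so `η_α ≤ (2ε^α)⁻¹ ω_α`:
every `L²(ω_α)` function lies in `L²(η_α)`. Writing `√(|x|^α+1) = (√(|x|^α+1) - √(|x|^α)) + √(|x|^α)`
splits the integrand into `‖f‖² η_α` plus `ω_α (f(x) - f(-x)) conj f(x)`. Since `ω_α` is even,
the second part integrates to the integral of its symmetrization
`½ ω_α (f(x) - f(-x)) conj (f(x) - f(-x)) = 2 ‖f_o‖² ω_α`. -/

lemma sqrt_add_one_sub_sqrt_le {c t : ℝ} (hc : 0 < c) (hct : c ≤ t) :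
    √(t + 1) - √t ≤ (2 * c)⁻¹ * √t := by
  have hs : 0 < √t := Real.sqrt_pos.2 (hc.trans_le hct)
  have hs2 : √t ^ 2 = t := Real.sq_sqrt (by linarith)
  have hu2 : √(t + 1) ^ 2 = t + 1 := Real.sq_sqrt (by linarith)
  have hsu : √t ≤ √(t + 1) := Real.sqrt_le_sqrt (by linarith)
  -- `2√t (√(t+1) - √t) ≤ (√(t+1) + √t)(√(t+1) - √t) = 1`, then multiply by `√t`.
  have key : 2 * t * (√(t + 1) - √t) ≤ √t := by nlinarith
  rw [inv_mul_eq_div, le_div_iff₀ (by positivity)]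
  nlinarith

lemma omegaW_nonneg (α : ℝ) (r : ℝ → ℝ) (x : ℝ) : 0 ≤ omegaW α r x :=
  mul_nonneg (Real.sqrt_nonneg _) (abs_nonneg _)

lemma eta_nonneg (α : ℝ) (r : ℝ → ℝ) (x : ℝ) : 0 ≤ eta α r x :=
  mul_nonneg (sub_nonneg.2 (Real.sqrt_le_sqrt (by linarith))) (abs_nonneg _)

section Weights

variable {α : ℝ} {r : ℝ → ℝ}

lemma measurable_omegaW (hr : Measurable r) : Measurable (omegaW α r) :=
  (measurable_id.abs.pow_const α).sqrt.mul hr.abs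

lemma measurable_eta (hr : Measurable r) : Measurable (eta α r) :=
  (((measurable_id.abs.pow_const α).add_const 1).sqrt.sub
    (measurable_id.abs.pow_const α).sqrt).mul hr.abs

lemma omegaW_neg (hr : ∀ x, |r (-x)| = |r x|) (x : ℝ) : omegaW α r (-x) = omegaW α r x := by
  simp only [omegaW, abs_neg, hr]

lemma eta_le_mul_omegaW {ε : ℝ} (hα : 0 ≤ α) (hε : 0 < ε) (hr0 : ∀ x, |x| ≤ ε → r x = 0)
    (x : ℝ) : eta α r x ≤ (2 * ε ^ α)⁻¹ * omegaW α r x := by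
  by_cases hx : |x| ≤ ε
  · simp [eta, omegaW, hr0 x hx]
  have hεx : ε ^ α ≤ |x| ^ α := Real.rpow_le_rpow hε.le (not_le.1 hx).le hα
  calc eta α r x ≤ (2 * ε ^ α)⁻¹ * √(|x| ^ α) * |r x| :=
        mul_le_mul_of_nonneg_right
          (sqrt_add_one_sub_sqrt_le (Real.rpow_pos_of_pos hε α) hεx) (abs_nonneg _)
    _ = (2 * ε ^ α)⁻¹ * omegaW α r x := by rw [omegaW, mul_assoc]

end Weights

namespace MemL2W

variable {w v : ℝ → ℝ} {f g : ℝ → ℂ}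

lemma mono_weight {C : ℝ} (hf : Measurable f) (hv : Measurable v) (hv0 : ∀ x, 0 ≤ v x)
    (hvw : ∀ x, v x ≤ C * w x) (h : MemL2W w f) : MemL2W v f := by
  refine (h.const_mul C).mono' ((hf.norm.pow_const 2).mul hv).aestronglyMeasurable
    (Eventually.of_forall fun x => ?_)
  rw [Real.norm_of_nonneg (mul_nonneg (by positivity) (hv0 x)), mul_left_comm]
  exact mul_le_mul_of_nonneg_left (hvw x) (by positivity)

lemma comp_neg (hw : ∀ x, w (-x) = w x) (h : MemL2W w f) : MemL2W w (fun x => f (-x)) := by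
  simpa only [MemL2W, hw] using Integrable.comp_neg (f := fun x => ‖f x‖ ^ 2 * w x) h

lemma sub (hf : Measurable f) (hg : Measurable g) (hw : Measurable w) (hw0 : ∀ x, 0 ≤ w x)
    (hf2 : MemL2W w f) (hg2 : MemL2W w g) : MemL2W w (fun x => f x - g x) := by
  refine ((hf2.add hg2).const_mul 2).mono'
    (((hf.sub hg).norm.pow_const 2).mul hw).aestronglyMeasurable
    (Eventually.of_forall fun x => ?_)
  rw [Real.norm_of_nonneg (mul_nonneg (by positivity) (hw0 x))]
  have hsq : ‖f x - g x‖ ^ 2 ≤ 2 * (‖f x‖ ^ 2 + ‖g x‖ ^ 2) := by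
    nlinarith [norm_sub_le (f x) (g x), norm_nonneg (f x - g x), sq_nonneg (‖f x‖ - ‖g x‖)]
  simpa only [Pi.add_apply, ← mul_assoc, ← add_mul] using
    mul_le_mul_of_nonneg_right hsq (hw0 x)

lemma integrable_mul_mul_conj (hf : Measurable f) (hg : Measurable g) (hw : Measurable w)
    (hw0 : ∀ x, 0 ≤ w x) (hf2 : MemL2W w f) (hg2 : MemL2W w g) :
    Integrable fun x => (w x : ℂ) * (f x * starRingEnd ℂ (g x)) := by
  refine ((hf2.add hg2).const_mul (1 / 2)).mono'
    ((Complex.measurable_ofReal.comp hw).mul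
      (hf.mul (Complex.continuous_conj.measurable.comp hg))).aestronglyMeasurable
    (Eventually.of_forall fun x => ?_)
  have hfg : ‖f x‖ * ‖g x‖ ≤ 1 / 2 * (‖f x‖ ^ 2 + ‖g x‖ ^ 2) := by
    nlinarith [sq_nonneg (‖f x‖ - ‖g x‖)]
  simp only [norm_mul, Complex.norm_real, Real.norm_of_nonneg (hw0 x),
    RingHomIsometric.norm_map, Pi.add_apply]
  nlinarith [mul_le_mul_of_nonneg_left hfg (hw0 x)]

end MemL2W

lemma integral_mul_sub_comp_neg_mul_conj {w : ℝ → ℝ} {f : ℝ → ℂ} (hw : ∀ x, w (-x) = w x)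
    (h : Integrable fun x => (w x : ℂ) * ((f x - f (-x)) * starRingEnd ℂ (f x))) :
    ∫ x, (w x : ℂ) * ((f x - f (-x)) * starRingEnd ℂ (f x)) =
      ((2 * ∫ x, ‖oddPart f x‖ ^ 2 * w x : ℝ) : ℂ) := by
  set B : ℝ → ℂ := fun x => (w x : ℂ) * ((f x - f (-x)) * starRingEnd ℂ (f x))
  have hsymm : ∀ x, B x + B (-x) = ((4 * (‖oddPart f x‖ ^ 2 * w x) : ℝ) : ℂ) := by
    intro x
    simp only [B, hw, neg_neg, oddPart, norm_div, Complex.norm_ofNat]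
    push_cast
    rw [div_pow, ← Complex.mul_conj', map_sub]
    ring
  have h2 : 2 * ∫ x, B x = ∫ x, (B x + B (-x)) := by
    rw [integral_add h h.comp_neg, integral_neg_eq_self B, two_mul]
  have h4 : ∫ x, (B x + B (-x)) = ((4 * ∫ x, ‖oddPart f x‖ ^ 2 * w x : ℝ) : ℂ) := by
    simp only [hsymm]
    rw [integral_complex_ofReal, integral_const_mul]
  have : (2 : ℂ) * ∫ x, B x = 2 * ((2 * ∫ x, ‖oddPart f x‖ ^ 2 * w x : ℝ) : ℂ) := by
    rw [h2, h4]; push_cast; ring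
  exact mul_left_cancel₀ two_ne_zero this

lemma sqrt_mul_sub_sqrt_mul_conj_mul_abs (α : ℝ) (r : ℝ → ℝ) (f : ℝ → ℂ) (x : ℝ) :
    ((Real.sqrt (|x| ^ α + 1) : ℂ) * f x - (Real.sqrt (|x| ^ α) : ℂ) * f (-x)) *
        (starRingEnd ℂ) (f x) * ((|r x| : ℝ) : ℂ) =
      ((‖f x‖ ^ 2 * eta α r x : ℝ) : ℂ) +
        (omegaW α r x : ℂ) * ((f x - f (-x)) * starRingEnd ℂ (f x)) := by
  simp only [eta, omegaW]
  push_cast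
  rw [← Complex.mul_conj']
  ring

theorem Qalpha_integral_identity_general (α ε : ℝ) (hα : α ∈ Set.Icc (0 : ℝ) 2) (hε : 0 < ε)
    (r : ℝ → ℝ) (hrm : Measurable r) (hr0 : ∀ x, |x| ≤ ε → r x = 0)
    (hrodd : ∀ x, r (-x) = -r x)
    (f : ℝ → ℂ) (hf : Measurable f)
    (hfω : Integrable (fun x => ‖f x‖ ^ 2 * omegaW α r x)) :
    Integrable (fun x =>
      ((Real.sqrt (|x| ^ α + 1) : ℂ) * f x - (Real.sqrt (|x| ^ α) : ℂ) * f (-x)) *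
        (starRingEnd ℂ) (f x) * ((|r x| : ℝ) : ℂ)) ∧
    (∫ x, ((Real.sqrt (|x| ^ α + 1) : ℂ) * f x - (Real.sqrt (|x| ^ α) : ℂ) * f (-x)) *
        (starRingEnd ℂ) (f x) * ((|r x| : ℝ) : ℂ)) =
      (((2 * ∫ x, ‖oddPart f x‖ ^ 2 * omegaW α r x) + ∫ x, ‖f x‖ ^ 2 * eta α r x : ℝ) : ℂ) ∧
    0 ≤ (2 * ∫ x, ‖oddPart f x‖ ^ 2 * omegaW α r x) + ∫ x, ‖f x‖ ^ 2 * eta α r x := by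
  have hfn : Measurable fun x => f (-x) := hf.comp measurable_neg
  have hfsub : Measurable fun x => f x - f (-x) := hf.sub hfn
  have hωe : ∀ x, omegaW α r (-x) = omegaW α r x :=
    omegaW_neg fun x => by rw [hrodd, abs_neg]
  have hfη : MemL2W (eta α r) f :=
    MemL2W.mono_weight hf (measurable_eta hrm) (eta_nonneg α r)
      (eta_le_mul_omegaW hα.1 hε hr0) hfω
  have hω : Measurable (omegaW α r) := measurable_omegaW hrm
  have hsub : MemL2W (omegaW α r) fun x => f x - f (-x) :=
    MemL2W.sub hf hfn hω (omegaW_nonneg α r) hfω (MemL2W.comp_neg hωe hfω)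
  have hB := hsub.integrable_mul_mul_conj hfsub hf hω (omegaW_nonneg α r) hfω
  have hA : Integrable fun x => ((‖f x‖ ^ 2 * eta α r x : ℝ) : ℂ) := hfη.ofReal
  simp only [sqrt_mul_sub_sqrt_mul_conj_mul_abs]
  refine ⟨hA.add hB, ?_, ?_⟩
  · rw [integral_add hA hB, integral_complex_ofReal, integral_mul_sub_comp_neg_mul_conj hωe hB]
    push_cast
    ring
  · have hodd : 0 ≤ ∫ x, ‖oddPart f x‖ ^ 2 * omegaW α r x :=
      integral_nonneg fun x => mul_nonneg (sq_nonneg _) (omegaW_nonneg α r x)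
    have heta : 0 ≤ ∫ x, ‖f x‖ ^ 2 * eta α r x :=
      integral_nonneg fun x => mul_nonneg (sq_nonneg _) (eta_nonneg α r x)
    linarith

/-- Lemma on `Q_α`: for `f ∈ L²(ω_α)`,
`∫ (√(|x|^α+1) f(x) − √(|x|^α) f(−x))·conj(f(x))·|r(x)| dx = 2‖f_o‖²_{ω_α} + ‖f‖²_{η_α}`,
and in particular this quantity is nonnegative (and finite: the integrand is integrable). -/
theorem Qalpha_integral_identity (α ε : ℝ) (hα : α ∈ Set.Icc (0 : ℝ) 2) (hε : 0 < ε)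
    (r : ℝ → ℝ) (hrm : Measurable r) (hr0 : ∀ x, |x| ≤ ε → r x = 0)
    (hrpos : ∀ᵐ x ∂(volume : Measure ℝ), ε < |x| → 0 < x * r x)
    (hrodd : ∀ x, r (-x) = -r x)
    (f : ℝ → ℂ) (hf : Measurable f)
    (hfω : Integrable (fun x => ‖f x‖ ^ 2 * omegaW α r x)) :
    Integrable (fun x =>
      ((Real.sqrt (|x| ^ α + 1) : ℂ) * f x - (Real.sqrt (|x| ^ α) : ℂ) * f (-x)) *
        (starRingEnd ℂ) (f x) * ((|r x| : ℝ) : ℂ)) ∧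
    (∫ x, ((Real.sqrt (|x| ^ α + 1) : ℂ) * f x - (Real.sqrt (|x| ^ α) : ℂ) * f (-x)) *
        (starRingEnd ℂ) (f x) * ((|r x| : ℝ) : ℂ)) =
      (((2 * ∫ x, ‖oddPart f x‖ ^ 2 * omegaW α r x) + ∫ x, ‖f x‖ ^ 2 * eta α r x : ℝ) : ℂ) ∧
    0 ≤ (2 * ∫ x, ‖oddPart f x‖ ^ 2 * omegaW α r x) + ∫ x, ‖f x‖ ^ 2 * eta α r x :=
  Qalpha_integral_identity_general α ε hα hε r hrm hr0 hrodd f hf hfω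
end

section
/- Let t₁ and t₂ be closed symmetric sesquilinear forms in a Hilbert space H, both represented by the same self-adjoint operator T (i.e., t_i[u,v] = (Tu,v) for u ∈ dom T, v ∈ dom t_i, and dom T is dense in each form's Kreĭn space). If dom t₁ ⊆ dom t₂ then t₁ = t₂. -/
/-! The map `J = j₂⁻¹ ∘ j₁ : K₁ → K₂` is bounded by the closed graph theorem. Because both forms
are represented by `T` and `dom T` is dense in `K₁`, `J` preserves the Kreĭn inner products,
`J* G₂ J = G₁`; hence `G₂ J` has a bounded left inverse and closed range. Its range is also dense:
a vector orthogonal to it is `t₂`-orthogonal to `dom T ⊆ range j₁`, which is dense in `K₂`.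
So `J` is onto, and `t₂ ∘ (J × J) = t₁` is the claimed equality of forms. -/

open scoped InnerProductSpace
open Function Set

section ClosedGraph

variable {𝕜 E F H : Type*} [NontriviallyNormedField 𝕜]
  [NormedAddCommGroup E] [NormedSpace 𝕜 E] [CompleteSpace E]
  [NormedAddCommGroup F] [NormedSpace 𝕜 F] [CompleteSpace F]
  [TopologicalSpace H] [T2Space H] [AddCommGroup H] [Module 𝕜 H]

theorem ContinuousLinearMap.exists_comp_eq_of_range_subset {j₁ : E →L[𝕜] H} {j₂ : F →L[𝕜] H}
    (hj₂ : Injective j₂) (h : range j₁ ⊆ range j₂) : ∃ J : E →L[𝕜] F, ∀ x, j₂ (J x) = j₁ x := by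
  let e := LinearEquiv.ofInjective (j₂ : F →ₗ[𝕜] H) hj₂
  let J : E →ₗ[𝕜] F :=
    e.symm.toLinearMap ∘ₗ (j₁ : E →ₗ[𝕜] H).codRestrict _ fun x => h ⟨x, rfl⟩
  have hJ : ∀ x, j₂ (J x) = j₁ x := fun x => congr_arg Subtype.val (e.apply_symm_apply _)
  have hgraph : (J.graph : Set (E × F)) = {p | j₂ p.2 = j₁ p.1} := by
    ext p
    rw [SetLike.mem_coe, LinearMap.mem_graph_iff]
    exact ⟨fun hp => (congr_arg j₂ hp).trans (hJ p.1), fun hp => hj₂ (hp.trans (hJ p.1).symm)⟩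
  have hclosed : IsClosed (J.graph : Set (E × F)) :=
    hgraph ▸ isClosed_eq (j₂.continuous.comp continuous_snd) (j₁.continuous.comp continuous_fst)
  exact ⟨.ofIsClosedGraph hclosed, hJ⟩

end ClosedGraph

section Representation

variable {𝕜 H K K₁ K₂ : Type*} [RCLike 𝕜]
  [NormedAddCommGroup H] [InnerProductSpace 𝕜 H]
  [NormedAddCommGroup K] [InnerProductSpace 𝕜 K] [CompleteSpace K]
  [NormedAddCommGroup K₁] [InnerProductSpace 𝕜 K₁]
  [NormedAddCommGroup K₂] [InnerProductSpace 𝕜 K₂]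

theorem ContinuousLinearMap.HasLeftInverse.surjective_of_forall_inner_eq_zero {A : K₁ →L[𝕜] K}
    (hA : A.HasLeftInverse) (h : ∀ w, (∀ u, ⟪A u, w⟫_𝕜 = 0) → w = 0) : Surjective A := by
  have hbot : (LinearMap.range (A : K₁ →ₗ[𝕜] K))ᗮ = ⊥ :=
    (Submodule.eq_bot_iff _).2 fun w hw => h w fun u => hw _ (LinearMap.mem_range_self _ u)
  have hclosed : (LinearMap.range (A : K₁ →ₗ[𝕜] K)).topologicalClosure =
      LinearMap.range (A : K₁ →ₗ[𝕜] K) :=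
    IsClosed.submodule_topologicalClosure_eq hA.isClosed_range
  rw [← A.coe_coe, ← LinearMap.range_eq_top, ← hclosed, Submodule.topologicalClosure_eq_top_iff]
  exact hbot

/-- `T` represents the form `t[u, v] = ⟪G u, v⟫` on `K ↪ H`: `t[u, v] = (T u, v)` for
`u ∈ dom T`. -/
def IsRepresentingOperator (T : H →ₗ.[𝕜] H) (j : K →L[𝕜] H) (G : K →L[𝕜] K) : Prop :=
  ∀ (x : T.domain) (u : K), j u = x → ∀ v, ⟪G u, v⟫_𝕜 = ⟪T x, j v⟫_𝕜

variable {T : H →ₗ.[𝕜] H} {j₁ : K₁ →L[𝕜] H} {j₂ : K₂ →L[𝕜] H} {G₁ : K₁ →L[𝕜] K₁}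
  {G₂ : K₂ →L[𝕜] K₂} {J : K₁ →L[𝕜] K₂}

theorem IsRepresentingOperator.inner_comp_eq (h₁ : IsRepresentingOperator T j₁ G₁)
    (h₂ : IsRepresentingOperator T j₂ G₂) (hdense₁ : Dense {u | j₁ u ∈ T.domain})
    (hJ : ∀ u, j₂ (J u) = j₁ u) (u v : K₁) : ⟪G₂ (J u), J v⟫_𝕜 = ⟪G₁ u, v⟫_𝕜 := by
  refine congr_fun (Continuous.ext_on hdense₁ (f := fun u => ⟪G₂ (J u), J v⟫_𝕜)
    (g := fun u => ⟪G₁ u, v⟫_𝕜) (by fun_prop) (by fun_prop) fun u hu => ?_) u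
  let x : T.domain := ⟨j₁ u, hu⟩
  simp only [h₂ x (J u) (hJ u), hJ, h₁ x u rfl]

theorem IsRepresentingOperator.eq_zero_of_forall_inner_comp_eq_zero
    (h₂ : IsRepresentingOperator T j₂ G₂) (hdense₂ : Dense {v | j₂ v ∈ T.domain})
    (hG₂ : Surjective G₂) (hdom₁ : ∀ x : T.domain, (x : H) ∈ range j₁)
    (hJ : ∀ u, j₂ (J u) = j₁ u) {w : K₂} (hw : ∀ u, ⟪G₂ (J u), w⟫_𝕜 = 0) : w = 0 := by
  have hzero : ∀ v, ⟪G₂ v, w⟫_𝕜 = 0 := by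
    refine congr_fun (Continuous.ext_on hdense₂ (f := fun v => ⟪G₂ v, w⟫_𝕜) (by fun_prop)
      continuous_const fun v hv => ?_)
    let x : T.domain := ⟨j₂ v, hv⟩
    obtain ⟨u, hu⟩ := hdom₁ x
    simp only [h₂ x v rfl, ← h₂ x (J u) ((hJ u).trans hu), hw]
  obtain ⟨v, rfl⟩ := hG₂ w
  exact inner_self_eq_zero.mp (hzero v)

end Representation

theorem closed_forms_with_same_representing_operator_coincide_general
    {H K₁ K₂ : Type*}
    [NormedAddCommGroup H] [InnerProductSpace ℂ H] [CompleteSpace H]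
    [NormedAddCommGroup K₁] [InnerProductSpace ℂ K₁] [CompleteSpace K₁]
    [NormedAddCommGroup K₂] [InnerProductSpace ℂ K₂] [CompleteSpace K₂]
    (j₁ : K₁ →L[ℂ] H) (j₂ : K₂ →L[ℂ] H)
    (hj₂ : Function.Injective j₂)
    (t₁ : K₁ → K₁ → ℂ) (t₂ : K₂ → K₂ → ℂ)
    (G₁ : K₁ ≃L[ℂ] K₁) (G₂ : K₂ ≃L[ℂ] K₂)
    (hG₁ : ∀ u v : K₁, t₁ u v = ⟪G₁ u, v⟫_ℂ)
    (hG₂ : ∀ u v : K₂, t₂ u v = ⟪G₂ u, v⟫_ℂ)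
    (T : H →ₗ.[ℂ] H)
    (hdom₁ : ∀ x : T.domain, (x : H) ∈ Set.range j₁)
    (hrep₁ : ∀ (x : T.domain) (u : K₁), j₁ u = (x : H) → ∀ v : K₁, t₁ u v = ⟪T x, j₁ v⟫_ℂ)
    (hrep₂ : ∀ (x : T.domain) (u : K₂), j₂ u = (x : H) → ∀ v : K₂, t₂ u v = ⟪T x, j₂ v⟫_ℂ)
    (hdense₁ : Dense {u : K₁ | j₁ u ∈ T.domain})
    (hdense₂ : Dense {u : K₂ | j₂ u ∈ T.domain})
    (hsub : Set.range j₁ ⊆ Set.range j₂) :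
    Set.range j₁ = Set.range j₂ ∧
    ∀ (u v : K₁) (u' v' : K₂), j₁ u = j₂ u' → j₁ v = j₂ v' → t₁ u v = t₂ u' v' := by
  have h₁ : IsRepresentingOperator T j₁ G₁ := fun x u hu v =>
    (hG₁ u v).symm.trans (hrep₁ x u hu v)
  have h₂ : IsRepresentingOperator T j₂ G₂ := fun x u hu v =>
    (hG₂ u v).symm.trans (hrep₂ x u hu v)
  obtain ⟨J, hJ⟩ := ContinuousLinearMap.exists_comp_eq_of_range_subset hj₂ hsub
  have hiso : ∀ u v, ⟪G₂ (J u), J v⟫_ℂ = ⟪G₁ u, v⟫_ℂ := h₁.inner_comp_eq h₂ hdense₁ hJ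
  have hleft : ((G₂ : K₂ →L[ℂ] K₂) ∘L J).HasLeftInverse := by
    have hadj : J.adjoint ∘L ((G₂ : K₂ →L[ℂ] K₂) ∘L J) = G₁ := by
      ext u
      refine ext_inner_right ℂ fun v => ?_
      simpa [ContinuousLinearMap.adjoint_inner_left] using hiso u v
    exact .of_comp (hadj ▸ G₁.hasLeftInverse)
  have hsurj : Surjective ((G₂ : K₂ →L[ℂ] K₂) ∘L J) :=
    hleft.surjective_of_forall_inner_eq_zero fun _ ↦
      h₂.eq_zero_of_forall_inner_comp_eq_zero hdense₂ G₂.surjective hdom₁ hJ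
  have hJsurj : Surjective J := hsurj.of_comp_left (f := G₂) G₂.injective
  refine ⟨?_, fun u v u' v' hu hv => ?_⟩
  · rw [← hJsurj.range_comp]
    exact congr_arg range (funext hJ).symm
  · obtain rfl : u' = J u := hj₂ (by rw [hJ, hu])
    obtain rfl : v' = J v := hj₂ (by rw [hJ, hv])
    rw [hG₁, hG₂, hiso]

/-- Two closed symmetric forms represented by the same self-adjoint operator coincide.
Each closed form `tᵢ` is encoded by its form-domain Kreĭn space: a Hilbert space `Kᵢ`
(the Hilbert majorant, gap point `0`) continuously and injectively embedded in `H` via `jᵢ`,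
together with a bounded, boundedly invertible, self-adjoint Gram operator `Gᵢ` so that
`tᵢ[u,v] = ⟪Gᵢ u, v⟫` is the Kreĭn inner product.  `T` is the common self-adjoint
representing operator: `tᵢ[u,v] = (Tu, v)` for `u ∈ dom T`, `v ∈ dom tᵢ`, and `dom T` is
dense in each `Kᵢ`.  If `dom t₁ ⊆ dom t₂` then `t₁ = t₂` (equal domains and equal values). -/
theorem closed_forms_with_same_representing_operator_coincide
    {H K₁ K₂ : Type*}
    [NormedAddCommGroup H] [InnerProductSpace ℂ H] [CompleteSpace H]
    [NormedAddCommGroup K₁] [InnerProductSpace ℂ K₁] [CompleteSpace K₁]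
    [NormedAddCommGroup K₂] [InnerProductSpace ℂ K₂] [CompleteSpace K₂]
    (j₁ : K₁ →L[ℂ] H) (j₂ : K₂ →L[ℂ] H)
    (hj₁ : Function.Injective j₁) (hj₂ : Function.Injective j₂)
    (t₁ : K₁ → K₁ → ℂ) (t₂ : K₂ → K₂ → ℂ)
    (G₁ : K₁ ≃L[ℂ] K₁) (G₂ : K₂ ≃L[ℂ] K₂)
    (hG₁ : ∀ u v : K₁, t₁ u v = ⟪G₁ u, v⟫_ℂ)
    (hG₁sa : ∀ u v : K₁, ⟪G₁ u, v⟫_ℂ = ⟪u, G₁ v⟫_ℂ)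
    (hG₂ : ∀ u v : K₂, t₂ u v = ⟪G₂ u, v⟫_ℂ)
    (hG₂sa : ∀ u v : K₂, ⟪G₂ u, v⟫_ℂ = ⟪u, G₂ v⟫_ℂ)
    (T : H →ₗ.[ℂ] H) (hT : IsSelfAdjoint T)
    (hdom₁ : ∀ x : T.domain, (x : H) ∈ Set.range j₁)
    (hdom₂ : ∀ x : T.domain, (x : H) ∈ Set.range j₂)
    (hrep₁ : ∀ (x : T.domain) (u : K₁), j₁ u = (x : H) → ∀ v : K₁, t₁ u v = ⟪T x, j₁ v⟫_ℂ)
    (hrep₂ : ∀ (x : T.domain) (u : K₂), j₂ u = (x : H) → ∀ v : K₂, t₂ u v = ⟪T x, j₂ v⟫_ℂ)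
    (hdense₁ : Dense {u : K₁ | j₁ u ∈ T.domain})
    (hdense₂ : Dense {u : K₂ | j₂ u ∈ T.domain})
    (hsub : Set.range j₁ ⊆ Set.range j₂) :
    Set.range j₁ = Set.range j₂ ∧
    ∀ (u v : K₁) (u' v' : K₂), j₁ u = j₂ u' → j₁ v = j₂ v' → t₁ u v = t₂ u' v' :=
  closed_forms_with_same_representing_operator_coincide_general j₁ j₂ hj₂ t₁ t₂ G₁ G₂ hG₁ hG₂ T
    hdom₁ hrep₁ hrep₂ hdense₁ hdense₂ hsub
end

section
/- Let A be a J-self-adjoint, J-non-negative, boundedly invertible operator in a Kreĭn space K, and let A_− be the induced self-adjoint operator in the dual Hilbert space K_−. Then for every f ∈ K_+ = dom(JA)^{1/2} one has ∫_ℝ λ d[E_K(λ)f, f] = {f,f}_+ = ‖(JA)^{1/2} f‖², where E_K is the eigenspectral function of A, which is the restriction to K of the spectral measure E of A_−. -/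
/-!
Approximate `λ ↦ λ` by simple functions `gₙ` with `|gₙ λ| ≤ 2 |λ|` and put `Tₙ = ∫ gₙ dE`.
Pairing with `A₋f` gives `re {Tₙ f, A₋f}₋ = ∫ gₙ d(μp - μn)`, which tends to the left-hand side
by dominated convergence. On the other hand `re {Tₙ u, u}₋ = ∫ gₙ dν_u → ∫ λ dν_u = re {A₋u, u}₋`
for `u ∈ dom A₋`, so by polarization `Tₙ f → A₋f` weakly against the dense domain. Since
`‖Tₙ f‖² = ∫ gₙ² dν_f ≤ 4 ‖A₋f‖²`, the sequence is bounded and the weak convergence extends to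
all of `K₋`; tested against `A₋f` it gives `‖A₋f‖²`.
-/

open MeasureTheory Filter Topology RCLike
open scoped InnerProductSpace

section

variable {𝕜 H : Type*} [RCLike 𝕜] [NormedAddCommGroup H] [InnerProductSpace 𝕜 H]

lemma re_inner_polarization {a b x y : H} (h : ⟪b, x⟫_𝕜 = ⟪y, a⟫_𝕜) :
    re ⟪a, y⟫_𝕜 = (re ⟪a + b, x + y⟫_𝕜 - re ⟪a, x⟫_𝕜 - re ⟪b, y⟫_𝕜) / 2 := by
  simp only [inner_add_left, inner_add_right, map_add, h, inner_re_symm y a]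
  ring

lemma tendsto_re_inner_of_dense {ι : Type*} {l : Filter ι} {u : ι → H} {a : H} {C : ℝ}
    (hu : ∀ i, ‖u i‖ ≤ C) {D : Set H} (hD : Dense D)
    (h : ∀ w ∈ D, Tendsto (fun i => re ⟪u i, w⟫_𝕜) l (𝓝 (re ⟪a, w⟫_𝕜))) (y : H) :
    Tendsto (fun i => re ⟪u i, y⟫_𝕜) l (𝓝 (re ⟪a, y⟫_𝕜)) := by
  have hlip (i : ι) : LipschitzWith C.toNNReal (fun y => re ⟪u i, y⟫_𝕜) := by
    refine LipschitzWith.of_dist_le_mul fun y y' => ?_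
    rw [Real.dist_eq, ← map_sub, ← inner_sub_right, dist_eq_norm]
    calc |re ⟪u i, y - y'⟫_𝕜| ≤ ‖⟪u i, y - y'⟫_𝕜‖ := abs_re_le_norm _
      _ ≤ ‖u i‖ * ‖y - y'‖ := norm_inner_le_norm _ _
      _ ≤ C.toNNReal * ‖y - y'‖ := by gcongr; exact (hu i).trans (Real.le_coe_toNNReal C)
  have hclosed := ((LipschitzWith.uniformEquicontinuous _ _ hlip).equicontinuous
    ).isClosed_setOfPred_tendsto (l := l) (f := fun y => re ⟪a, y⟫_𝕜) (by fun_prop)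
  have hsub : closure D ⊆ _ := hclosed.closure_subset_iff.mpr h
  exact hsub (hD.closure_eq ▸ Set.mem_univ y)

end

namespace MeasureTheory.SimpleFunc

variable {𝕜 H : Type*} [RCLike 𝕜] [NormedAddCommGroup H] [InnerProductSpace 𝕜 H]

noncomputable def spectralIntegral (g : SimpleFunc ℝ ℝ) (E : Set ℝ → H →L[𝕜] H) : H →L[𝕜] H :=
  ∑ y ∈ g.range, (y : 𝕜) • E (g ⁻¹' {y})

variable (g : SimpleFunc ℝ ℝ) (E : Set ℝ → H →L[𝕜] H)

lemma re_inner_spectralIntegral_apply (u w : H) :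
    re ⟪g.spectralIntegral E u, w⟫_𝕜 = ∑ y ∈ g.range, y * re ⟪E (g ⁻¹' {y}) u, w⟫_𝕜 := by
  simp [spectralIntegral, sum_inner, inner_smul_left]

lemma isSymmetric_spectralIntegral
    (hE : ∀ (s : Set ℝ) (u w : H), MeasurableSet s → ⟪E s u, w⟫_𝕜 = ⟪u, E s w⟫_𝕜) :
    (g.spectralIntegral E : H →ₗ[𝕜] H).IsSymmetric := by
  intro u w
  simp [spectralIntegral, sum_inner, inner_sum, inner_smul_left, inner_smul_right,
    hE _ _ _ (g.measurableSet_fiber _)]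

lemma integral_eq_sum_range {α : Type*} [MeasurableSpace α] (f : SimpleFunc α ℝ)
    {μ : Measure α} (hf : Integrable f μ) :
    ∫ x, f x ∂μ = ∑ y ∈ f.range, y * μ.real (f ⁻¹' {y}) := by
  simp [← f.integral_eq_integral hf, integral_eq, mul_comm]

lemma re_inner_spectralIntegral_apply_eq_integral_sub {u w : H} {μp μn : Measure ℝ}
    (hμ : ∀ s, MeasurableSet s → μp.real s - μn.real s = re ⟪E s u, w⟫_𝕜)
    (hp : Integrable g μp) (hn : Integrable g μn) :
    re ⟪g.spectralIntegral E u, w⟫_𝕜 = ∫ x, g x ∂μp - ∫ x, g x ∂μn := by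
  simp only [re_inner_spectralIntegral_apply, integral_eq_sum_range g hp,
    integral_eq_sum_range g hn, ← Finset.sum_sub_distrib, ← mul_sub,
    hμ _ (g.measurableSet_fiber _)]

lemma norm_spectralIntegral_apply_sq
    (hEmul : ∀ s t : Set ℝ, MeasurableSet s → MeasurableSet t → (E s).comp (E t) = E (s ∩ t))
    (hE : ∀ (s : Set ℝ) (u w : H), MeasurableSet s → ⟪E s u, w⟫_𝕜 = ⟪u, E s w⟫_𝕜)
    {u : H} {ν : Measure ℝ} (hν : ∀ s, MeasurableSet s → ν.real s = re ⟪E s u, u⟫_𝕜)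
    (hg : Integrable g ν) :
    ‖g.spectralIntegral E u‖ ^ 2 = ∫ x, g x ^ 2 ∂ν := by
  have hfiber (y z : ℝ) : E (g ⁻¹' {z}) (E (g ⁻¹' {y}) u) = E (g ⁻¹' {z} ∩ g ⁻¹' {y}) u := by
    rw [← hEmul _ _ (g.measurableSet_fiber _) (g.measurableSet_fiber _)]; rfl
  have hcross (y : ℝ) (hy : y ∈ g.range) : re ⟪E (g ⁻¹' {y}) u, g.spectralIntegral E u⟫_𝕜
      = y * ν.real (g ⁻¹' {y}) := by
    have hsymm := isSymmetric_spectralIntegral g E hE (E (g ⁻¹' {y}) u) u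
    simp only [ContinuousLinearMap.coe_coe] at hsymm
    rw [← hsymm, re_inner_spectralIntegral_apply, Finset.sum_eq_single_of_mem y hy]
    · rw [hfiber, Set.inter_self, hν _ (g.measurableSet_fiber _)]
    · intro z _ hzy
      rw [hfiber, ← hν _ ((g.measurableSet_fiber _).inter (g.measurableSet_fiber _)),
        ((Set.disjoint_singleton.mpr hzy).preimage g).inter_eq]
      simp
  have hsq : Integrable (g.map (· ^ 2)) ν :=
    integrable_iff_finMeasSupp.mpr ((integrable_iff_finMeasSupp.mp hg).map (by simp))
  have hint : ∫ x, g x ^ 2 ∂ν = (g.map (· ^ 2)).integral ν :=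
    ((g.map (· ^ 2)).integral_eq_integral hsq).symm
  rw [@norm_sq_eq_re_inner 𝕜, re_inner_spectralIntegral_apply, Finset.sum_congr rfl
    fun y hy => congrArg (y * ·) (hcross y hy), hint, map_integral g _ hg (by simp)]
  exact Finset.sum_congr rfl fun y _ => by rw [smul_eq_mul]; ring

end MeasureTheory.SimpleFunc

noncomputable def idApprox (n : ℕ) : SimpleFunc ℝ ℝ :=
  SimpleFunc.approxOn id measurable_id Set.univ 0 (Set.mem_univ 0) n

lemma abs_idApprox_le (n : ℕ) (x : ℝ) : |idApprox n x| ≤ 2 * |x| := by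
  simpa [idApprox, two_mul] using
    SimpleFunc.norm_approxOn_zero_le measurable_id (Set.mem_univ 0) x n

lemma tendsto_idApprox (x : ℝ) : Tendsto (fun n => idApprox n x) atTop (𝓝 x) :=
  SimpleFunc.tendsto_approxOn measurable_id (Set.mem_univ 0) (by simp)

lemma integrable_idApprox {μ : Measure ℝ} (hμ : Integrable (fun x => x) μ) (n : ℕ) :
    Integrable (idApprox n) μ :=
  (hμ.abs.const_mul 2).mono' (idApprox n).aestronglyMeasurable
    (.of_forall (abs_idApprox_le n))

lemma tendsto_integral_idApprox {μ : Measure ℝ} (hμ : Integrable (fun x => x) μ) :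
    Tendsto (fun n => ∫ x, idApprox n x ∂μ) atTop (𝓝 (∫ x, x ∂μ)) :=
  tendsto_integral_of_dominated_convergence _ (fun n => (idApprox n).aestronglyMeasurable)
    (hμ.abs.const_mul 2) (fun n => .of_forall (abs_idApprox_le n))
    (.of_forall tendsto_idApprox)

lemma integral_idApprox_sq_le {μ : Measure ℝ} (hμ : Integrable (fun x => x ^ 2) μ) (n : ℕ) :
    ∫ x, idApprox n x ^ 2 ∂μ ≤ 4 * ∫ x, x ^ 2 ∂μ := by
  rw [← integral_const_mul]
  refine integral_mono_of_nonneg (.of_forall fun x => sq_nonneg _) (hμ.const_mul 4)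
    (.of_forall fun x => ?_)
  calc idApprox n x ^ 2 = |idApprox n x| ^ 2 := (sq_abs _).symm
    _ ≤ (2 * |x|) ^ 2 := by gcongr; exact abs_idApprox_le n x
    _ = 4 * x ^ 2 := by rw [mul_pow, sq_abs]; norm_num

section

open SimpleFunc

variable {𝕜 H : Type*} [RCLike 𝕜] [NormedAddCommGroup H] [InnerProductSpace 𝕜 H]
  {E : Set ℝ → H →L[𝕜] H}

lemma tendsto_re_inner_spectralIntegral_idApprox {u w : H} {μp μn : Measure ℝ}
    (hμ : ∀ s, MeasurableSet s → μp.real s - μn.real s = re ⟪E s u, w⟫_𝕜)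
    (hp : Integrable (fun x => x) μp) (hn : Integrable (fun x => x) μn) :
    Tendsto (fun n => re ⟪(idApprox n).spectralIntegral E u, w⟫_𝕜) atTop
      (𝓝 (∫ x, x ∂μp - ∫ x, x ∂μn)) :=
  ((tendsto_integral_idApprox hp).sub (tendsto_integral_idApprox hn)).congr fun n =>
    (re_inner_spectralIntegral_apply_eq_integral_sub _ E hμ (integrable_idApprox hp n)
      (integrable_idApprox hn n)).symm

lemma norm_spectralIntegral_idApprox_apply_sq_le
    (hEmul : ∀ s t : Set ℝ, MeasurableSet s → MeasurableSet t → (E s).comp (E t) = E (s ∩ t))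
    (hE : ∀ (s : Set ℝ) (u w : H), MeasurableSet s → ⟪E s u, w⟫_𝕜 = ⟪u, E s w⟫_𝕜)
    {u : H} {ν : Measure ℝ} (hν : ∀ s, MeasurableSet s → ν.real s = re ⟪E s u, u⟫_𝕜)
    (hx : Integrable (fun x => x) ν) (hx2 : Integrable (fun x => x ^ 2) ν) (n : ℕ) :
    ‖(idApprox n).spectralIntegral E u‖ ^ 2 ≤ 4 * ∫ x, x ^ 2 ∂ν := by
  rw [norm_spectralIntegral_apply_sq _ E hEmul hE hν (integrable_idApprox hx n)]
  exact integral_idApprox_sq_le hx2 n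

end

/-- Everything is transported to the Hilbert space `K₋` (here `Km`): `A₋` (here `Am`) is a
self-adjoint operator whose domain is `K₊`, the `K₊`-inner product is
`{f,g}₊ = {A₋f, A₋g}₋` (so `{f,f}₊ = ‖A₋f‖² = ‖(JA)^{1/2}f‖²`), the Kreĭn pairing satisfies
`[u, v] = {A₋u, v}₋` for `u ∈ K₊`, the eigenspectral function `E_K` of `A` is the restriction
to `K` of the spectral measure `E` of `A₋`; `E` is encoded by a projection-valued family
together with its diagonal measures `ν u` and the spectral representation of `A₋`, and the
signed measure `Δ ↦ [E_K(Δ)f, f] = {E(Δ)(A₋f), f}₋` by the difference `μp − μn`. -/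
theorem eigenspectral_integral_eq_plus_norm_general
    {Km : Type*} [NormedAddCommGroup Km] [InnerProductSpace ℂ Km] [CompleteSpace Km]
    (Am : Km →ₗ.[ℂ] Km) (hAm : IsSelfAdjoint Am)
    (E : Set ℝ → Km →L[ℂ] Km)
    (hEmul : ∀ s t : Set ℝ, MeasurableSet s → MeasurableSet t →
      (E s).comp (E t) = E (s ∩ t))
    (hEsa : ∀ (s : Set ℝ) (u v : Km), MeasurableSet s → ⟪E s u, v⟫_ℂ = ⟪u, E s v⟫_ℂ)
    -- the diagonal measures `ν u (Δ) = {E(Δ)u, u}₋ = ‖E(Δ)u‖²` of the spectral measure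
    (ν : Km → Measure ℝ)
    (hν : ∀ (u : Km) (s : Set ℝ), MeasurableSet s → (ν u s).toReal = (⟪E s u, u⟫_ℂ).re)
    -- spectral theorem for the self-adjoint operator `A₋`
    (hspec₁ : ∀ u : Am.domain, Integrable (fun x : ℝ => x) (ν u) ∧
      (⟪Am u, (u : Km)⟫_ℂ).re = ∫ x : ℝ, x ∂(ν (u : Km)))
    (hspec₂ : ∀ u : Am.domain, Integrable (fun x : ℝ => x ^ 2) (ν u) ∧
      ‖Am u‖ ^ 2 = ∫ x : ℝ, x ^ 2 ∂(ν (u : Km)))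
    -- the fixed element `f ∈ K₊`
    (f : Am.domain)
    -- `μp − μn` is the signed measure `Δ ↦ [E_K(Δ)f, f] = {E(Δ)(A₋f), f}₋`
    (μp μn : Measure ℝ)
    (hμ : ∀ s : Set ℝ, MeasurableSet s →
      (μp s).toReal - (μn s).toReal = (⟪E s (Am f), (f : Km)⟫_ℂ).re)
    (hμp : Integrable (fun x : ℝ => x) μp) (hμn : Integrable (fun x : ℝ => x) μn) :
    (∫ x : ℝ, x ∂μp) - (∫ x : ℝ, x ∂μn) = ‖Am f‖ ^ 2 := by
  simp only [← RCLike.re_to_complex, ← measureReal_def] at hν hspec₁ hμ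
  have hsymm : Am.IsFormalAdjoint Am := by
    simpa only [LinearPMap.isSelfAdjoint_def.mp hAm] using
      Am.adjoint_isFormalAdjoint hAm.dense_domain
  set T : ℕ → Km →L[ℂ] Km := fun n => (idApprox n).spectralIntegral E
  have hTsymm (n : ℕ) (u w : Km) : ⟪T n u, w⟫_ℂ = ⟪u, T n w⟫_ℂ :=
    SimpleFunc.isSymmetric_spectralIntegral _ E hEsa u w
  have hdiag (u : Am.domain) :
      Tendsto (fun n => re ⟪T n u, (u : Km)⟫_ℂ) atTop (𝓝 (re ⟪Am u, (u : Km)⟫_ℂ)) := by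
    simpa [(hspec₁ u).2] using tendsto_re_inner_spectralIntegral_idApprox (E := E) (μn := 0)
      (fun s hs => by simpa using hν u s hs) (hspec₁ u).1 integrable_zero_measure
  have hweak (w : Am.domain) :
      Tendsto (fun n => re ⟪T n f, (w : Km)⟫_ℂ) atTop (𝓝 (re ⟪Am f, (w : Km)⟫_ℂ)) := by
    have hfw := hdiag (f + w)
    simp only [Submodule.coe_add, LinearPMap.map_add, ContinuousLinearMap.map_add] at hfw
    rw [re_inner_polarization (hsymm w f)]
    exact (((hfw.sub (hdiag f)).sub (hdiag w)).div_const 2).congr fun n =>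
      (re_inner_polarization (hTsymm n w f)).symm
  have hbound (n : ℕ) : ‖T n f‖ ≤ 2 * ‖Am f‖ :=
    le_of_pow_le_pow_left₀ two_ne_zero (by positivity)
      ((norm_spectralIntegral_idApprox_apply_sq_le hEmul hEsa (hν f) (hspec₁ f).1 (hspec₂ f).1
        n).trans_eq (by rw [mul_pow, (hspec₂ f).2]; norm_num))
  have hLHS : Tendsto (fun n => re ⟪T n f, Am f⟫_ℂ) atTop
      (𝓝 ((∫ x : ℝ, x ∂μp) - ∫ x : ℝ, x ∂μn)) :=
    (tendsto_re_inner_spectralIntegral_idApprox hμ hμp hμn).congr fun n => by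
      rw [hTsymm, inner_re_symm]
  rw [← inner_self_eq_norm_sq (𝕜 := ℂ)]
  exact tendsto_nhds_unique hLHS
    (tendsto_re_inner_of_dense hbound hAm.dense_domain (fun w hw => hweak ⟨w, hw⟩) (Am f))

/-- For a J-self-adjoint, J-non-negative, boundedly invertible operator `A` in a Kreĭn space
`K`, with induced self-adjoint operator `A₋` in the dual Hilbert space `K₋`, one has
`∫ λ d[E_K(λ)f, f] = {f,f}₊ = ‖(JA)^{1/2} f‖²` for every `f ∈ K₊ = dom(JA)^{1/2} = dom A₋`.

Everything is transported to the Hilbert space `K₋` (here `Km`): `A₋` (here `Am`) is a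
self-adjoint operator whose domain is `K₊`, the `K₊`-inner product is
`{f,g}₊ = {A₋f, A₋g}₋` (so `{f,f}₊ = ‖A₋f‖² = ‖(JA)^{1/2}f‖²`), the Kreĭn pairing satisfies
`[u, v] = {A₋u, v}₋` for `u ∈ K₊`, the eigenspectral function `E_K` of `A` is the restriction
to `K` of the spectral measure `E` of `A₋`; `E` is encoded by a projection-valued family
together with its diagonal measures `ν u` and the spectral representation of `A₋`, and the
signed measure `Δ ↦ [E_K(Δ)f, f] = {E(Δ)(A₋f), f}₋` by the difference `μp − μn`. -/
theorem eigenspectral_integral_eq_plus_norm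
    {Km : Type*} [NormedAddCommGroup Km] [InnerProductSpace ℂ Km] [CompleteSpace Km]
    (Am : Km →ₗ.[ℂ] Km) (hAm : IsSelfAdjoint Am)
    (E : Set ℝ → Km →L[ℂ] Km)
    (hEmul : ∀ s t : Set ℝ, MeasurableSet s → MeasurableSet t →
      (E s).comp (E t) = E (s ∩ t))
    (hEsa : ∀ (s : Set ℝ) (u v : Km), MeasurableSet s → ⟪E s u, v⟫_ℂ = ⟪u, E s v⟫_ℂ)
    (hEuniv : E Set.univ = ContinuousLinearMap.id ℂ Km)
    -- the diagonal measures `ν u (Δ) = {E(Δ)u, u}₋ = ‖E(Δ)u‖²` of the spectral measure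
    (ν : Km → Measure ℝ)
    (hν : ∀ (u : Km) (s : Set ℝ), MeasurableSet s → (ν u s).toReal = (⟪E s u, u⟫_ℂ).re)
    -- spectral theorem for the self-adjoint operator `A₋`
    (hspec₁ : ∀ u : Am.domain, Integrable (fun x : ℝ => x) (ν u) ∧
      (⟪Am u, (u : Km)⟫_ℂ).re = ∫ x : ℝ, x ∂(ν (u : Km)))
    (hspec₂ : ∀ u : Am.domain, Integrable (fun x : ℝ => x ^ 2) (ν u) ∧
      ‖Am u‖ ^ 2 = ∫ x : ℝ, x ^ 2 ∂(ν (u : Km)))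
    -- the fixed element `f ∈ K₊`
    (f : Am.domain)
    -- `μp − μn` is the signed measure `Δ ↦ [E_K(Δ)f, f] = {E(Δ)(A₋f), f}₋`
    (μp μn : Measure ℝ) [IsFiniteMeasure μp] [IsFiniteMeasure μn]
    (hμ : ∀ s : Set ℝ, MeasurableSet s →
      (μp s).toReal - (μn s).toReal = (⟪E s (Am f), (f : Km)⟫_ℂ).re)
    (hμp : Integrable (fun x : ℝ => x) μp) (hμn : Integrable (fun x : ℝ => x) μn) :
    (∫ x : ℝ, x ∂μp) - (∫ x : ℝ, x ∂μn) = ‖Am f‖ ^ 2 :=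
  eigenspectral_integral_eq_plus_norm_general Am hAm E hEmul hEsa ν hν hspec₁ hspec₂ f μp μn hμ hμp
    hμn
end
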